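/- arXiv:1909.12649 — 6 statements merged into one kernel-verified Lean document; each statement's English description precedes it below -/
import Mathlib

section
/- For the n×n matrix A_n with entries (A_n)_{ij} = (j-i)², the vector w with entries w_i = n+1-2i is an eigenvector of A_n with eigenvalue -n(n²-1)/6. -/
/-! With 0-based indices the weights are `n - 1 - 2j`, and the `i`-th entry of `A w` is
`∑ⱼ (j - i)² (n - 1 - 2j) = M₂ - 2i M₁ + i² M₀`, where `Mₖ = ∑ⱼ jᵏ (n - 1 - 2j)`.
The weights are antisymmetric under `j ↦ n - 1 - j`, so `M₀ = 0`, and Faulhaber's formulas give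
`M₁ = λ` and `M₂ = (n - 1) λ` with `λ = -n(n² - 1)/6`; hence the entry is `λ (n - 1 - 2i)`. -/

open Finset Matrix

section PowerSums

variable {K : Type*} [Field K] [CharZero K]

lemma sum_range_natCast (n : ℕ) : ∑ j ∈ range n, (j : K) = n * (n - 1) / 2 := by
  induction n with
  | zero => simp
  | succ m ih => rw [sum_range_succ, ih]; push_cast; ring

lemma sum_range_natCast_sq (n : ℕ) :
    ∑ j ∈ range n, (j : K) ^ 2 = n * (n - 1) * (2 * n - 1) / 6 := by
  induction n with
  | zero => simp
  | succ m ih => rw [sum_range_succ, ih]; push_cast; ring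

lemma sum_range_natCast_cube (n : ℕ) :
    ∑ j ∈ range n, (j : K) ^ 3 = (n * (n - 1) / 2) ^ 2 := by
  induction n with
  | zero => simp
  | succ m ih => rw [sum_range_succ, ih]; push_cast; ring

lemma sum_range_sub_two_mul (n : ℕ) : ∑ j ∈ range n, ((n : K) - 1 - 2 * j) = 0 := by
  rw [sum_sub_distrib, sum_sub_distrib, ← mul_sum, sum_range_natCast]
  simp only [sum_const, card_range, nsmul_eq_mul, mul_one]
  ring

lemma sum_range_mul_sub_two_mul (n : ℕ) :
    ∑ j ∈ range n, (j : K) * (n - 1 - 2 * j) = -((n : K) * (n ^ 2 - 1) / 6) := by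
  have hexpand : ∀ j : ℕ, (j : K) * (n - 1 - 2 * j) = (n - 1) * j - 2 * (j : K) ^ 2 :=
    fun j => by ring
  simp only [hexpand, sum_sub_distrib, ← mul_sum, sum_range_natCast, sum_range_natCast_sq]
  ring

lemma sum_range_sq_mul_sub_two_mul (n : ℕ) :
    ∑ j ∈ range n, (j : K) ^ 2 * (n - 1 - 2 * j) = -((n : K) * (n ^ 2 - 1) / 6) * (n - 1) := by
  have hexpand : ∀ j : ℕ, (j : K) ^ 2 * (n - 1 - 2 * j) = (n - 1) * j ^ 2 - 2 * (j : K) ^ 3 :=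
    fun j => by ring
  simp only [hexpand, sum_sub_distrib, ← mul_sum, sum_range_natCast_sq, sum_range_natCast_cube]
  ring

lemma sum_range_sub_sq_mul_sub_two_mul (n : ℕ) (c : K) :
    ∑ j ∈ range n, ((j : K) - c) ^ 2 * (n - 1 - 2 * j)
      = -((n : K) * (n ^ 2 - 1) / 6) * (n - 1 - 2 * c) := by
  have hexpand : ∀ j : ℕ, ((j : K) - c) ^ 2 * (n - 1 - 2 * j)
      = (j : K) ^ 2 * (n - 1 - 2 * j) - 2 * c * ((j : K) * (n - 1 - 2 * j))
        + c ^ 2 * ((n : K) - 1 - 2 * j) :=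
    fun j => by ring
  rw [sum_congr rfl fun j _ => hexpand j, sum_add_distrib, sum_sub_distrib, ← mul_sum, ← mul_sum,
    sum_range_sub_two_mul, sum_range_mul_sub_two_mul, sum_range_sq_mul_sub_two_mul]
  ring

end PowerSums

theorem stmt_0_general (n : ℕ)
    (A : Matrix (Fin n) (Fin n) ℝ)
    (hA : ∀ i j : Fin n, A i j = ((j.val : ℝ) - (i.val : ℝ)) ^ 2)
    (w : Fin n → ℝ)
    (hw : ∀ i : Fin n, w i = (n : ℝ) + 1 - 2 * ((i.val : ℝ) + 1)) :
    A.mulVec w = (-((n : ℝ) * ((n : ℝ) ^ 2 - 1) / 6)) • w := by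
  funext i
  have hentry : ∀ j : Fin n, A i j * w j = ((j.val : ℝ) - i.val) ^ 2 * (n - 1 - 2 * j.val) :=
    fun j => by rw [hA, hw]; ring
  simp only [mulVec, dotProduct, hentry, Pi.smul_apply, smul_eq_mul]
  rw [Fin.sum_univ_eq_sum_range (fun j => ((j : ℝ) - i.val) ^ 2 * (n - 1 - 2 * j)),
    sum_range_sub_sq_mul_sub_two_mul, hw]
  ring

theorem stmt_0 (n : ℕ) (hn : 1 ≤ n)
    (A : Matrix (Fin n) (Fin n) ℝ)
    (hA : ∀ i j : Fin n, A i j = ((j.val : ℝ) - (i.val : ℝ)) ^ 2)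
    (w : Fin n → ℝ)
    (hw : ∀ i : Fin n, w i = (n : ℝ) + 1 - 2 * ((i.val : ℝ) + 1)) :
    A.mulVec w = (-((n : ℝ) * ((n : ℝ) ^ 2 - 1) / 6)) • w :=
  stmt_0_general n A hA w hw
end

section
/- There exists an entrywise nonnegative n×3 matrix L_n such that A_n = L_n R L_nᵀ, where R is the 3×3 matrix with rows (0,1,1), (1,-6,1), (1,1,0). Specifically, L_n consists of the last three columns of (I_n - J_n)^{-3}, where J_n is the n×n nilpotent Jordan block. -/
/-!
`(I - J)⁻¹` is the upper triangular all-ones matrix, and multiplying an upper triangular Toeplitz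
matrix by `I - J` takes first differences of its symbol. By Pascal's rule, `(I - J)⁻³` is therefore
the Toeplitz matrix with entries `C(j - i + 2, 2) = (j - i + 1)(j - i + 2)/2` for `i ≤ j`, and on the
last three columns this quadratic formula also holds below the diagonal, where it vanishes. The
factorisation `A = L R Lᵀ` thus reduces to a polynomial identity in two real variables.
-/

open Matrix

namespace Matrix

def upperShift (R : Type*) [Zero R] [One R] (n : ℕ) : Matrix (Fin n) (Fin n) R :=
  of fun i j => if i.val + 1 = j.val then 1 else 0

def upperToeplitz {R : Type*} [Zero R] {n : ℕ} (f : ℕ → R) : Matrix (Fin n) (Fin n) R :=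
  of fun i j => if i.val ≤ j.val then f (j.val - i.val) else 0

section

variable {R : Type*} {n : ℕ}

theorem upperShift_mul_apply [NonAssocSemiring R] (B : Matrix (Fin n) (Fin n) R) (i j : Fin n) :
    (upperShift R n * B) i j = if h : i.val + 1 < n then B ⟨i.val + 1, h⟩ j else 0 := by
  rw [mul_apply]
  split_ifs with h
  · rw [Finset.sum_eq_single ⟨i.val + 1, h⟩]
    · simp [upperShift]
    · intro k _ hk
      have : i.val + 1 ≠ k.val := fun hik => hk (Fin.ext hik.symm)
      simp [upperShift, this]
    · simp
  · refine Finset.sum_eq_zero fun k _ => ?_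
    have : i.val + 1 ≠ k.val := by omega
    simp [upperShift, this]

theorem upperToeplitz_nonneg [Semiring R] [PartialOrder R] {f : ℕ → R} (hf : ∀ k, 0 ≤ f k)
    (i j : Fin n) : 0 ≤ (upperToeplitz f : Matrix (Fin n) (Fin n) R) i j := by
  simp only [upperToeplitz, of_apply]
  split_ifs
  exacts [hf _, le_rfl]

variable [Ring R]

theorem upperToeplitz_single_zero_one :
    (upperToeplitz (Pi.single 0 1) : Matrix (Fin n) (Fin n) R) = 1 := by
  ext i j
  simp only [upperToeplitz, of_apply, one_apply, Pi.single_apply]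
  split_ifs <;> first | rfl | omega

theorem one_sub_upperShift_mul_upperToeplitz {f g : ℕ → R} (h₀ : f 0 = g 0)
    (hsucc : ∀ k, f (k + 1) - f k = g (k + 1)) :
    (1 - upperShift R n) * upperToeplitz f = upperToeplitz g := by
  ext i j
  rw [sub_mul, one_mul, sub_apply, upperShift_mul_apply]
  simp only [upperToeplitz, of_apply]
  by_cases hij : i.val ≤ j.val
  · obtain ⟨d, hd⟩ := Nat.exists_eq_add_of_le hij
    rcases d with _ | d
    · simp [hd, h₀]
    · have : i.val + 1 ≤ j.val := by omega
      rw [dif_pos (by omega), if_pos hij, if_pos hij, if_pos this, hd, Nat.add_sub_cancel_left,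
        show i.val + (d + 1) - (i.val + 1) = d by omega, hsucc]
  · have : ¬ i.val + 1 ≤ j.val := by omega
    simp [hij, this]

theorem one_sub_upperShift_pow_mul_upperToeplitz_choose (m : ℕ) :
    (1 - upperShift R n) ^ (m + 1) *
      upperToeplitz (fun k => ((k + m).choose m : R)) = 1 := by
  induction m with
  | zero =>
    have h := one_sub_upperShift_mul_upperToeplitz (R := R) (n := n)
      (f := fun _ => 1) (g := Pi.single 0 1) (by simp) (by simp)
    simpa [upperToeplitz_single_zero_one] using h
  | succ m ih =>
    have pascal : (1 - upperShift R n) * upperToeplitz (fun k => ((k + (m + 1)).choose (m + 1) : R))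
        = upperToeplitz (fun k => ((k + m).choose m : R)) :=
      one_sub_upperShift_mul_upperToeplitz (by simp) fun k => by
        rw [show k + 1 + (m + 1) = k + 1 + m + 1 by omega, Nat.choose_succ_succ',
          show k + 1 + m = k + (m + 1) by omega]
        push_cast
        abel
    rw [pow_succ, mul_assoc, pascal, ih]

end

theorem inv_one_sub_upperShift_pow {R : Type*} [CommRing R] {n : ℕ} (m : ℕ) :
    (1 - upperShift R n)⁻¹ ^ (m + 1) = upperToeplitz fun k => ((k + m).choose m : R) := by
  rw [inv_pow', inv_eq_right_inv (one_sub_upperShift_pow_mul_upperToeplitz_choose m)]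

end Matrix

theorem upperToeplitz_choose_two_apply_eq {n : ℕ} (i j : Fin n) (h : i.val ≤ j.val + 2) :
    (upperToeplitz fun k => ((k + 2).choose 2 : ℝ)) i j
      = ((j : ℝ) - i + 1) * ((j : ℝ) - i + 2) / 2 := by
  simp only [upperToeplitz, of_apply]
  split_ifs with hij
  · rw [Nat.cast_choose_two]
    push_cast [Nat.cast_sub hij]
    ring
  · obtain hi | hi : i.val = j.val + 1 ∨ i.val = j.val + 2 := by omega
    all_goals
      rw [hi]
      push_cast
      ring

theorem triangular_quadratic_form_eq_sq (a b : ℝ) :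
    let p : ℝ → ℝ := fun x => (x + 1) * (x + 2) / 2
    ∑ l : Fin 3, (∑ k : Fin 3, p (a + k) * !![0, 1, 1; 1, -6, 1; 1, 1, 0] k l) * p (b + l)
      = (a - b) ^ 2 := by
  simp [Fin.sum_univ_three]
  ring

theorem stmt_5 (n : ℕ) (hn : 3 ≤ n)
    (A : Matrix (Fin n) (Fin n) ℝ)
    (hA : ∀ i j : Fin n, A i j = ((j.val : ℝ) - (i.val : ℝ)) ^ 2)
    (J : Matrix (Fin n) (Fin n) ℝ)
    (hJ : ∀ i j : Fin n, J i j = if i.val + 1 = j.val then 1 else 0)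
    (R : Matrix (Fin 3) (Fin 3) ℝ)
    (hR : R = !![0, 1, 1; 1, -6, 1; 1, 1, 0]) :
    ∃ L : Matrix (Fin n) (Fin 3) ℝ,
      (∀ (i : Fin n) (k : Fin 3),
        L i k = ((1 - J)⁻¹ ^ 3) i ⟨n - 3 + k.val, by have := k.isLt; omega⟩) ∧
      (∀ (i : Fin n) (k : Fin 3), 0 ≤ L i k) ∧
      A = L * R * Lᵀ := by
  have hJ_eq : J = upperShift ℝ n := by ext i j; simp [hJ, upperShift]
  have hpow : (1 - J)⁻¹ ^ 3 = upperToeplitz fun k => ((k + 2).choose 2 : ℝ) := by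
    rw [hJ_eq]; exact inv_one_sub_upperShift_pow 2
  have hL (i : Fin n) (k : Fin 3) :
      ((1 - J)⁻¹ ^ 3) i ⟨n - 3 + k.val, by omega⟩
        = ((n - 3 - i + k : ℝ) + 1) * ((n - 3 - i + k : ℝ) + 2) / 2 := by
    rw [hpow, upperToeplitz_choose_two_apply_eq _ _ (show i.val ≤ n - 3 + k.val + 2 by omega)]
    push_cast [Nat.cast_sub hn]
    ring
  refine ⟨of fun i k => ((1 - J)⁻¹ ^ 3) i ⟨n - 3 + k.val, by omega⟩, fun _ _ => rfl,
    fun i k => ?_, ?_⟩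
  · simp only [of_apply, hpow]
    exact upperToeplitz_nonneg (fun _ => Nat.cast_nonneg _) _ _
  · ext i j
    rw [hA, show ((j : ℝ) - i) ^ 2 = ((n - 3 - i : ℝ) - (n - 3 - j)) ^ 2 by ring,
      ← triangular_quadratic_form_eq_sq]
    simp only [mul_apply, transpose_apply, of_apply, hL, hR]
end

section
/- For every α with 0 ≤ α < n(n²-1)/6, the matrix A_n + α·I_n is not positive semidefinite; and A_n + (n(n²-1)/6)·I_n is positive semidefinite. -/
open Matrix

private lemma pow1 (n : ℕ) : ∑ i ∈ Finset.range n, (i:ℝ) = n*(n-1)/2 := by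
  induction n with
  | zero => simp
  | succ k ih => rw [Finset.sum_range_succ, ih]; push_cast; ring

private lemma pow2 (n : ℕ) : ∑ i ∈ Finset.range n, (i:ℝ)^2 = n*(n-1)*(2*n-1)/6 := by
  induction n with
  | zero => simp
  | succ k ih => rw [Finset.sum_range_succ, ih]; push_cast; ring

private lemma pow3 (n : ℕ) : ∑ i ∈ Finset.range n, (i:ℝ)^3 = (n*(n-1)/2)^2 := by
  induction n with
  | zero => simp
  | succ k ih => rw [Finset.sum_range_succ, ih]; push_cast; ring

private lemma pow4 (n : ℕ) :
    ∑ i ∈ Finset.range n, (i:ℝ)^4 = n*(n-1)*(2*n-1)*(3*n^2-3*n-1)/30 := by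
  induction n with
  | zero => simp
  | succ k ih => rw [Finset.sum_range_succ, ih]; push_cast; ring

private lemma cent1 (n : ℕ) : ∑ i ∈ Finset.range n, ((i:ℝ) - ((n:ℝ)-1)/2) = 0 := by
  rw [Finset.sum_sub_distrib, Finset.sum_const, nsmul_eq_mul, Finset.card_range, pow1]; ring

private lemma cent2 (n : ℕ) :
    ∑ i ∈ Finset.range n, ((i:ℝ) - ((n:ℝ)-1)/2)^2 = n*((n:ℝ)^2-1)/12 := by
  have expand : ∀ i ∈ Finset.range n, ((i:ℝ) - ((n:ℝ)-1)/2)^2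
      = (i:ℝ)^2 - (((n:ℝ)-1)) * (i:ℝ) + (((n:ℝ)-1)/2)^2 := fun i _ => by ring
  rw [Finset.sum_congr rfl expand, Finset.sum_add_distrib, Finset.sum_sub_distrib,
    ← Finset.mul_sum, Finset.sum_const, nsmul_eq_mul, Finset.card_range, pow2, pow1]; ring

private lemma cent3 (n : ℕ) : ∑ i ∈ Finset.range n, ((i:ℝ) - ((n:ℝ)-1)/2)^3 = 0 := by
  have expand : ∀ i ∈ Finset.range n, ((i:ℝ) - ((n:ℝ)-1)/2)^3
      = (i:ℝ)^3 - (3*(((n:ℝ)-1)/2)) * (i:ℝ)^2 + (3*(((n:ℝ)-1)/2)^2) * (i:ℝ)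
        - (((n:ℝ)-1)/2)^3 := fun i _ => by ring
  rw [Finset.sum_congr rfl expand, Finset.sum_sub_distrib, Finset.sum_add_distrib,
    Finset.sum_sub_distrib, ← Finset.mul_sum, ← Finset.mul_sum, Finset.sum_const,
    nsmul_eq_mul, Finset.card_range, pow3, pow2, pow1]; ring

private lemma cent4 (n : ℕ) :
    ∑ i ∈ Finset.range n, ((i:ℝ) - ((n:ℝ)-1)/2)^4
      = n*((n:ℝ)^2-1)*(3*(n:ℝ)^2-7)/240 := by
  have expand : ∀ i ∈ Finset.range n, ((i:ℝ) - ((n:ℝ)-1)/2)^4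
      = (i:ℝ)^4 - (4*(((n:ℝ)-1)/2)) * (i:ℝ)^3 + (6*(((n:ℝ)-1)/2)^2) * (i:ℝ)^2
        - (4*(((n:ℝ)-1)/2)^3) * (i:ℝ) + (((n:ℝ)-1)/2)^4 := fun i _ => by ring
  rw [Finset.sum_congr rfl expand, Finset.sum_add_distrib, Finset.sum_sub_distrib,
    Finset.sum_add_distrib, Finset.sum_sub_distrib, ← Finset.mul_sum, ← Finset.mul_sum,
    ← Finset.mul_sum, Finset.sum_const, nsmul_eq_mul, Finset.card_range,
    pow4, pow3, pow2, pow1]; ring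

private noncomputable def cc (n : ℕ) (i : Fin n) : ℝ := (i.val : ℝ) - ((n:ℝ)-1)/2

private lemma ccsum1 (n : ℕ) : ∑ i, cc n i = 0 := by
  simp only [cc]
  exact (Fin.sum_univ_eq_sum_range (fun k => ((k:ℝ) - ((n:ℝ)-1)/2)) n).trans (cent1 n)

private lemma ccsum2 (n : ℕ) : ∑ i, (cc n i)^2 = n*((n:ℝ)^2-1)/12 := by
  simp only [cc]
  exact (Fin.sum_univ_eq_sum_range (fun k => ((k:ℝ) - ((n:ℝ)-1)/2)^2) n).trans (cent2 n)

private lemma ccsum3 (n : ℕ) : ∑ i, (cc n i)^3 = 0 := by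
  simp only [cc]
  exact (Fin.sum_univ_eq_sum_range (fun k => ((k:ℝ) - ((n:ℝ)-1)/2)^3) n).trans (cent3 n)

private lemma ccsum4 (n : ℕ) : ∑ i, (cc n i)^4 = n*((n:ℝ)^2-1)*(3*(n:ℝ)^2-7)/240 := by
  simp only [cc]
  exact (Fin.sum_univ_eq_sum_range (fun k => ((k:ℝ) - ((n:ℝ)-1)/2)^4) n).trans (cent4 n)

private lemma sum_lin6 {ι : Type*} (s : Finset ι) (p1 p2 p3 p4 p5 p6 : ι → ℝ)
    (a1 a2 a3 a4 a5 a6 : ℝ) :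
    ∑ i ∈ s, (a1 * p1 i + a2 * p2 i + a3 * p3 i + a4 * p4 i + a5 * p5 i + a6 * p6 i)
      = a1 * ∑ i ∈ s, p1 i + a2 * ∑ i ∈ s, p2 i + a3 * ∑ i ∈ s, p3 i
        + a4 * ∑ i ∈ s, p4 i + a5 * ∑ i ∈ s, p5 i + a6 * ∑ i ∈ s, p6 i := by
  simp [Finset.sum_add_distrib, Finset.mul_sum]

private lemma final_ineq (N S2 T0 T1 T2 X r u : ℝ) (hN : 0 < N) (hS2 : 0 < S2)
    (hr : 0 ≤ r) (hu2 : u^2 ≤ r * (8*N*S2^2))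
    (hrdef : r = N^2*S2^2*X - N*S2^2*T0^2 - N^2*S2*T1^2)
    (hudef : u = N^2*S2*T2 - N*S2^2*T0) :
    0 ≤ 2*T0*T2 - 2*T1^2 + 2*S2*X := by
  have h8 : (0:ℝ) < 8*N*S2^2 := by positivity
  have hEpos : 0 ≤ T0*u + 2*N*S2^2*T0^2 + r := by
    rcases le_or_gt 0 (T0*u + 2*N*S2^2*T0^2 + r) with h|h
    · exact h
    · exfalso
      have hkey : 0 ≤ 8*N*S2^2*(T0*u + 2*N*S2^2*T0^2 + r) := by
        nlinarith [sq_nonneg (4*N*S2^2*T0 + u), hu2]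
      nlinarith [hkey, mul_pos h8 (neg_pos.mpr h)]
  have hp : (0:ℝ) < N^2*S2 := by positivity
  have hgoal : 0 ≤ N^2*S2*(2*T0*T2 - 2*T1^2 + 2*S2*X) := by
    have hh : N^2*S2*(2*T0*T2 - 2*T1^2 + 2*S2*X) = 2*(T0*u + 2*N*S2^2*T0^2 + r) := by
      rw [hrdef, hudef]; ring
    linarith [hh, hEpos]
  nlinarith [hgoal, hp]

private lemma quad_form (n : ℕ) (A : Matrix (Fin n) (Fin n) ℝ)
    (hA : ∀ i j : Fin n, A i j = ((j.val : ℝ) - (i.val : ℝ)) ^ 2) (β : ℝ) (x : Fin n → ℝ) :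
    x ⬝ᵥ ((A + β • (1 : Matrix (Fin n) (Fin n) ℝ)) *ᵥ x)
      = 2*(∑ i, x i)*(∑ i, x i * (cc n i)^2) - 2*(∑ i, x i * cc n i)^2
        + β * ∑ i, (x i)^2 := by
  have hsplit : x ⬝ᵥ ((A + β • (1 : Matrix (Fin n) (Fin n) ℝ)) *ᵥ x)
      = x ⬝ᵥ (A *ᵥ x) + β * ∑ i, (x i)^2 := by
    rw [Matrix.add_mulVec, dotProduct_add, Matrix.smul_mulVec, Matrix.one_mulVec,
      dotProduct_smul]
    simp [dotProduct, smul_eq_mul, sq]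
  rw [hsplit]
  congr 1
  have hAc : ∀ i j : Fin n, A i j = (cc n j - cc n i)^2 := by
    intro i j; rw [hA]; unfold cc; ring
  have expand : ∀ i j : Fin n, x i * (x j * (cc n j)^2) + (x i * (cc n i)^2) * x j
      - (x i * cc n i) * (2 * (x j * cc n j)) = x i * (A i j * x j) := by
    intro i j; rw [hAc]; ring
  calc x ⬝ᵥ (A *ᵥ x) = ∑ i, ∑ j, x i * (A i j * x j) := by
        simp [dotProduct, mulVec, Finset.mul_sum]
    _ = ∑ i : Fin n, ∑ j : Fin n, (x i * (x j * (cc n j)^2) + (x i * (cc n i)^2) * x j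
          - (x i * cc n i) * (2 * (x j * cc n j))) :=
        Finset.sum_congr rfl fun i _ => Finset.sum_congr rfl fun j _ => (expand i j).symm
    _ = ∑ i : Fin n, (x i * (∑ j, x j * (cc n j)^2) + (x i * (cc n i)^2) * (∑ j, x j)
          - (x i * cc n i) * (∑ j, 2 * (x j * cc n j))) := by
        refine Finset.sum_congr rfl fun i _ => ?_
        rw [Finset.sum_sub_distrib, Finset.sum_add_distrib, ← Finset.mul_sum, ← Finset.mul_sum,
          ← Finset.mul_sum]
    _ = (∑ i, x i) * (∑ j, x j * (cc n j)^2) + (∑ i, x i * (cc n i)^2) * (∑ j, x j)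
          - (∑ i, x i * cc n i) * (∑ j, 2 * (x j * cc n j)) := by
        rw [Finset.sum_sub_distrib, Finset.sum_add_distrib, ← Finset.sum_mul, ← Finset.sum_mul,
          ← Finset.sum_mul]
    _ = 2*(∑ i, x i)*(∑ i, x i * (cc n i)^2) - 2*(∑ i, x i * cc n i)^2 := by
        rw [← Finset.mul_sum]; ring

theorem stmt_9 (n : ℕ) (hn : 2 ≤ n)
    (A : Matrix (Fin n) (Fin n) ℝ)
    (hA : ∀ i j : Fin n, A i j = ((j.val : ℝ) - (i.val : ℝ)) ^ 2)
    (f : ℝ) (hf : f = (n : ℝ) * ((n : ℝ) ^ 2 - 1) / 6) :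
    (∀ α : ℝ, 0 ≤ α → α < f →
      ¬ (A + α • (1 : Matrix (Fin n) (Fin n) ℝ)).PosSemidef) ∧
    (A + f • (1 : Matrix (Fin n) (Fin n) ℝ)).PosSemidef := by
  have hN : (2:ℝ) ≤ (n:ℝ) := by exact_mod_cast hn
  have hNpos : (0:ℝ) < (n:ℝ) := by linarith
  have hS2pos : (0:ℝ) < (n:ℝ)*((n:ℝ)^2-1)/12 := by nlinarith
  constructor
  · -- not PSD for α < f
    intro α hα hαf hPSD
    have h2 := hPSD.dotProduct_mulVec_nonneg (cc n)
    have hstar : star (cc n) = cc n := by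
      funext i; simp
    rw [hstar, quad_form n A hA α (cc n)] at h2
    have a1 : ∑ i, cc n i * (cc n i)^2 = 0 :=
      (Finset.sum_congr rfl fun i _ => by ring).trans (ccsum3 n)
    have a2 : ∑ i, cc n i * cc n i = (n:ℝ)*((n:ℝ)^2-1)/12 :=
      (Finset.sum_congr rfl fun i _ => by ring).trans (ccsum2 n)
    rw [ccsum1 n, a1, a2, ccsum2 n] at h2
    rw [hf] at hαf
    nlinarith [h2, hS2pos, hαf]
  · -- PSD at f
    refine Matrix.posSemidef_iff_dotProduct_mulVec.mpr ⟨?_, ?_⟩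
    · -- Hermitian
      have h1 : A.IsHermitian := by
        ext i j
        simp only [Matrix.conjTranspose_apply, hA, star_trivial]
        ring
      rw [Matrix.smul_one_eq_diagonal]
      exact h1.add (Matrix.isHermitian_diagonal _)
    · intro x
      have hstar : star x = x := by funext i; simp
      rw [hstar, quad_form n A hA f x]
      set N := (n:ℝ) with hNdef
      set S2 : ℝ := N*(N^2-1)/12 with hS2def
      set S4 : ℝ := N*(N^2-1)*(3*N^2-7)/240 with hS4def
      have hc1 : ∑ i, cc n i = 0 := ccsum1 n
      have hc2 : ∑ i, (cc n i)^2 = S2 := ccsum2 n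
      have hc3 : ∑ i, (cc n i)^3 = 0 := ccsum3 n
      have hc4 : ∑ i, (cc n i)^4 = S4 := ccsum4 n
      have hone : ∑ _i : Fin n, (1:ℝ) = N := by simp [hNdef]
      have hf2 : f = 2*S2 := by rw [hf, hS2def]; ring
      set T0 := ∑ i, x i with hT0
      set T1 := ∑ i, x i * cc n i with hT1
      set T2 := ∑ i, x i * (cc n i)^2 with hT2
      set X := ∑ i, (x i)^2 with hX
      clear_value N S2 S4 T0 T1 T2 X
      -- Cauchy-Schwarz
      have CS := Finset.sum_mul_sq_le_sq_mul_sq Finset.univ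
        (fun i => N*S2*x i - S2*T0 - N*T1*cc n i) (fun i => N*(cc n i)^2 - S2)
      have hGH : ∑ i, (N*S2*x i - S2*T0 - N*T1*cc n i) * (N*(cc n i)^2 - S2)
          = N^2*S2*T2 - N*S2^2*T0 := by
        have e : ∀ i : Fin n, (N*S2*x i - S2*T0 - N*T1*cc n i) * (N*(cc n i)^2 - S2)
            = (N^2*S2) * (x i * (cc n i)^2) + (-(N*S2^2)) * (x i)
              + (-(N*S2*T0)) * ((cc n i)^2) + (-(N^2*T1)) * ((cc n i)^3)
              + (N*S2*T1) * (cc n i) + (S2^2*T0) * 1 := fun i => by ring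
        rw [Finset.sum_congr rfl (fun i _ => e i), sum_lin6, hone, hc1, hc2, hc3,
          ← hT0, ← hT2]
        ring
      have hG2 : ∑ i, (N*S2*x i - S2*T0 - N*T1*cc n i)^2
          = N^2*S2^2*X - N*S2^2*T0^2 - N^2*S2*T1^2 := by
        have e : ∀ i : Fin n, (N*S2*x i - S2*T0 - N*T1*cc n i)^2
            = (N^2*S2^2) * ((x i)^2) + (-(2*N*S2^2*T0)) * (x i)
              + (-(2*N^2*S2*T1)) * (x i * cc n i) + (2*N*S2*T0*T1) * (cc n i)
              + (N^2*T1^2) * ((cc n i)^2) + (S2^2*T0^2) * 1 := fun i => by ring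
        rw [Finset.sum_congr rfl (fun i _ => e i), sum_lin6, hone, hc1, hc2,
          ← hT0, ← hT1, ← hX]
        ring
      have hH2 : ∑ i, (N*(cc n i)^2 - S2)^2 = N^2*S4 - N*S2^2 := by
        have e : ∀ i : Fin n, (N*(cc n i)^2 - S2)^2
            = (N^2) * ((cc n i)^4) + (-(2*N*S2)) * ((cc n i)^2) + (S2^2) * 1
              + 0 * (cc n i) + 0 * (cc n i) + 0 * (cc n i) := fun i => by ring
        rw [Finset.sum_congr rfl (fun i _ => e i), sum_lin6, hone, hc1, hc2, hc4]
        ring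
      rw [hGH, hG2, hH2] at CS
      have hr : (0:ℝ) ≤ N^2*S2^2*X - N*S2^2*T0^2 - N^2*S2*T1^2 := by
        rw [← hG2]
        exact Finset.sum_nonneg fun i _ => sq_nonneg _
      have hW : N^2*S4 - N*S2^2 ≤ 8*N*S2^2 := by
        rw [hS2def, hS4def]
        nlinarith [hN, sq_nonneg N, sq_nonneg (N-2), sq_nonneg (N+2)]
      have hu2 : (N^2*S2*T2 - N*S2^2*T0)^2
          ≤ (N^2*S2^2*X - N*S2^2*T0^2 - N^2*S2*T1^2) * (8*N*S2^2) :=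
        le_trans CS (mul_le_mul_of_nonneg_left hW hr)
      rw [hf2]
      exact final_ineq N S2 T0 T1 T2 X _ _ hNpos hS2pos hr hu2 rfl rfl
end

section
/- The matrix A_n + (n(n-1)(2n-1)/6)·I_n is completely positive, i.e., it can be written as BBᵀ for some entrywise nonnegative matrix B. -/
/-!
A symmetric matrix `N ≥ 0` plus a diagonal dominating its row sums is completely positive:
`N + diag (∑ⱼ Nᵢⱼ) = ∑_{p,q} (N_pq / 2) (e_p + e_q)(e_p + e_q)ᵀ`, and the remaining nonnegative
diagonal is `D^{1/2} (D^{1/2})ᵀ`. For `A_n` the row sum `∑ⱼ (j - i)²` equals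
`∑ₖ k² + n i (i - (n - 1))`, which is at most `∑_{k<n} k² = n(n-1)(2n-1)/6` for `0 ≤ i ≤ n - 1`.
-/

open Matrix Finset

namespace Matrix

variable {ι : Type*}

def IsCompletelyPositive (M : Matrix ι ι ℝ) : Prop :=
  ∃ (k : ℕ) (B : Matrix ι (Fin k) ℝ), (∀ i j, 0 ≤ B i j) ∧ M = B * Bᵀ

theorem isCompletelyPositive_mul_transpose {κ : Type*} [Fintype κ] (B : Matrix ι κ ℝ)
    (hB : ∀ i j, 0 ≤ B i j) : (B * Bᵀ).IsCompletelyPositive := by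
  let e := (Fintype.equivFin κ).symm
  exact ⟨_, B.submatrix id e, fun i j => hB i (e j), by
    rw [transpose_submatrix, submatrix_mul_equiv, submatrix_id_id]⟩

theorem isCompletelyPositive_zero : (0 : Matrix ι ι ℝ).IsCompletelyPositive :=
  ⟨0, 0, fun _ j => j.elim0, by simp⟩

namespace IsCompletelyPositive

variable {M N : Matrix ι ι ℝ}

theorem add (hM : M.IsCompletelyPositive) (hN : N.IsCompletelyPositive) :
    (M + N).IsCompletelyPositive := by
  obtain ⟨k, B, hB, rfl⟩ := hM
  obtain ⟨l, C, hC, rfl⟩ := hN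
  rw [← fromCols_mul_fromRows, ← transpose_fromCols]
  exact isCompletelyPositive_mul_transpose _ (by rintro i (j | j) <;> simp [hB, hC])

theorem smul (hM : M.IsCompletelyPositive) {a : ℝ} (ha : 0 ≤ a) :
    (a • M).IsCompletelyPositive := by
  obtain ⟨k, B, hB, rfl⟩ := hM
  refine ⟨k, √a • B, fun i j => mul_nonneg (Real.sqrt_nonneg a) (hB i j), ?_⟩
  rw [transpose_smul, Matrix.smul_mul, Matrix.mul_smul, smul_smul, Real.mul_self_sqrt ha]

end IsCompletelyPositive

theorem isCompletelyPositive_sum {α : Type*} (s : Finset α) {M : α → Matrix ι ι ℝ}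
    (hM : ∀ a ∈ s, (M a).IsCompletelyPositive) : (∑ a ∈ s, M a).IsCompletelyPositive := by
  classical
  induction s using Finset.induction_on with
  | empty => simpa using isCompletelyPositive_zero
  | insert a s ha ih =>
    rw [sum_insert ha]
    exact (hM a (mem_insert_self a s)).add (ih fun b hb => hM b (mem_insert_of_mem hb))

theorem isCompletelyPositive_vecMulVec_self {v : ι → ℝ} (hv : 0 ≤ v) :
    (vecMulVec v v).IsCompletelyPositive := by
  rw [vecMulVec_eq Unit, ← transpose_replicateCol]
  exact isCompletelyPositive_mul_transpose _ fun i _ => hv i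

theorem isCompletelyPositive_diagonal [Fintype ι] [DecidableEq ι] {d : ι → ℝ} (hd : 0 ≤ d) :
    (diagonal d).IsCompletelyPositive := by
  have : diagonal d = diagonal (fun i => √(d i)) * (diagonal fun i => √(d i))ᵀ := by
    rw [diagonal_transpose, diagonal_mul_diagonal]
    simp only [Real.mul_self_sqrt (hd _)]
  rw [this]
  exact isCompletelyPositive_mul_transpose _ fun i j => by
    by_cases h : i = j <;> simp [h]

theorem add_diagonal_sum_eq_sum_smul_vecMulVec [Fintype ι] [DecidableEq ι] {N : Matrix ι ι ℝ}
    (hN : N.IsSymm) :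
    N + diagonal (fun i => ∑ j, N i j) = ∑ p, ∑ q, (N p q / 2) •
      vecMulVec (Pi.single p 1 + Pi.single q 1) (Pi.single p 1 + Pi.single q 1) := by
  ext i j
  simp only [Matrix.add_apply, diagonal_apply, Matrix.sum_apply, Matrix.smul_apply,
    vecMulVec_apply, Pi.add_apply, Pi.single_apply, mul_add, mul_ite, mul_one, mul_zero,
    smul_eq_mul, sum_add_distrib, sum_ite_irrel, sum_const_zero, sum_ite_eq, mem_univ,
    ↓reduceIte]
  rw [hN.apply i j]
  split_ifs with h
  · subst h
    simp only [hN.apply i, ← sum_div]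
    ring
  · ring

theorem isCompletelyPositive_add_diagonal [Fintype ι] [DecidableEq ι] {N : Matrix ι ι ℝ}
    {d : ι → ℝ} (hN : N.IsSymm) (hN₀ : ∀ i j, 0 ≤ N i j) (hd : ∀ i, ∑ j, N i j ≤ d i) :
    (N + diagonal d).IsCompletelyPositive := by
  have hsplit : N + diagonal d =
      (N + diagonal fun i => ∑ j, N i j) + diagonal fun i => d i - ∑ j, N i j := by
    rw [add_assoc, diagonal_add]
    simp only [add_sub_cancel]
  rw [hsplit, add_diagonal_sum_eq_sum_smul_vecMulVec hN]
  refine .add (isCompletelyPositive_sum _ fun p _ => isCompletelyPositive_sum _ fun q _ => ?_)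
    (isCompletelyPositive_diagonal fun i => sub_nonneg.2 (hd i))
  exact (isCompletelyPositive_vecMulVec_self
    (add_nonneg (Pi.single_nonneg.2 zero_le_one) (Pi.single_nonneg.2 zero_le_one))).smul
    (by linarith [hN₀ p q])

end Matrix

theorem sum_range_cast_sq (n : ℕ) :
    ∑ k ∈ range n, (k : ℝ) ^ 2 = n * (n - 1) * (2 * n - 1) / 6 := by
  induction n with
  | zero => simp
  | succ m ih =>
    rw [sum_range_succ, ih]
    push_cast
    ring

theorem sum_range_cast_sub_sq (n : ℕ) (x : ℝ) :
    ∑ j ∈ range n, ((j : ℝ) - x) ^ 2 = ∑ j ∈ range n, (j : ℝ) ^ 2 + n * x * (x - (n - 1)) := by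
  induction n with
  | zero => simp
  | succ m ih =>
    rw [sum_range_succ, sum_range_succ, ih]
    push_cast
    ring

theorem sum_range_cast_sub_sq_le (n : ℕ) {x : ℝ} (hx₀ : 0 ≤ x) (hx : x ≤ n - 1) :
    ∑ j ∈ range n, ((j : ℝ) - x) ^ 2 ≤ ∑ j ∈ range n, (j : ℝ) ^ 2 := by
  rw [sum_range_cast_sub_sq]
  have : (n : ℝ) * x * (x - (n - 1)) ≤ 0 :=
    mul_nonpos_of_nonneg_of_nonpos (by positivity) (by linarith)
  linarith

theorem stmt_10_general (n : ℕ)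
    (A : Matrix (Fin n) (Fin n) ℝ)
    (hA : ∀ i j : Fin n, A i j = ((j.val : ℝ) - (i.val : ℝ)) ^ 2)
    (c : ℝ) (hc : c = (n : ℝ) * ((n : ℝ) - 1) * (2 * (n : ℝ) - 1) / 6) :
    ∃ (k : ℕ) (B : Matrix (Fin n) (Fin k) ℝ),
      (∀ (i : Fin n) (j : Fin k), 0 ≤ B i j) ∧
      A + c • (1 : Matrix (Fin n) (Fin n) ℝ) = B * Bᵀ := by
  have hA_symm : A.IsSymm := by
    ext i j
    rw [transpose_apply, hA, hA]
    ring
  have hA_nonneg : ∀ i j, 0 ≤ A i j := fun i j => hA i j ▸ sq_nonneg _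
  have hA_rowSum : ∀ i, ∑ j, A i j ≤ c := by
    intro i
    simp only [hA, hc, ← sum_range_cast_sq]
    rw [Fin.sum_univ_eq_sum_range (fun j => ((j : ℝ) - i) ^ 2)]
    exact sum_range_cast_sub_sq_le n (Nat.cast_nonneg _)
      (by rw [le_sub_iff_add_le]; exact_mod_cast i.isLt)
  rw [smul_one_eq_diagonal]
  exact isCompletelyPositive_add_diagonal hA_symm hA_nonneg hA_rowSum

theorem stmt_10 (n : ℕ) (hn : 1 ≤ n)
    (A : Matrix (Fin n) (Fin n) ℝ)
    (hA : ∀ i j : Fin n, A i j = ((j.val : ℝ) - (i.val : ℝ)) ^ 2)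
    (c : ℝ) (hc : c = (n : ℝ) * ((n : ℝ) - 1) * (2 * (n : ℝ) - 1) / 6) :
    ∃ (k : ℕ) (B : Matrix (Fin n) (Fin k) ℝ),
      (∀ (i : Fin n) (j : Fin k), 0 ≤ B i j) ∧
      A + c • (1 : Matrix (Fin n) (Fin n) ℝ) = B * Bᵀ :=
  stmt_10_general n A hA c hc
end

section
/- Let A be a symmetric (m+k)×(m+k) matrix of block form [[D₁, C],[Cᵀ, D₂]] where D₁, D₂ are diagonal and C is entrywise nonnegative. If A has an eigenvector w = (w₁, -w₂) with w₁ ∈ ℝᵐ, w₂ ∈ ℝᵏ both entrywise strictly positive, corresponding to a nonnegative eigenvalue, then (I_m ⊕ -I_k) A (I_m ⊕ -I_k) has nonpositive off-diagonal entries and A is positive semidefinite. -/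
open Matrix

lemma key_psd {n : Type*} [Fintype n] (B : Matrix n n ℝ)
    (hsym : ∀ i j, B i j = B j i)
    (hoff : ∀ i j, i ≠ j → B i j ≤ 0)
    (v : n → ℝ) (hv : ∀ i, 0 < v i)
    (lam : ℝ) (hlam : 0 ≤ lam)
    (heig : ∀ i, ∑ j, B i j * v j = lam * v i)
    (x : n → ℝ) : 0 ≤ x ⬝ᵥ B.mulVec x := by
  classical
  set y : n → ℝ := fun i => x i / v i with hy
  have hx : ∀ i, x i = v i * y i := by
    intro i; rw [hy]; field_simp
    exact (mul_div_cancel_right₀ (x i) (hv i).ne').symm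
  have hdot : x ⬝ᵥ B.mulVec x = ∑ i, ∑ j, B i j * (v i * y i) * (v j * y j) := by
    simp only [dotProduct, Matrix.mulVec, Finset.mul_sum]
    refine Finset.sum_congr rfl fun i _ => Finset.sum_congr rfl fun j _ => ?_
    rw [← hx i, ← hx j]; ring
  have e1 : ∑ i, ∑ j, B i j * v j * (v i * y i ^ 2) = lam * ∑ i, (x i) ^ 2 := by
    rw [Finset.mul_sum]
    refine Finset.sum_congr rfl fun i _ => ?_
    rw [← Finset.sum_mul, heig i, hx i]; ring
  have e2 : ∑ i, ∑ j, B i j * v i * (v j * y j ^ 2) = lam * ∑ i, (x i) ^ 2 := by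
    rw [Finset.sum_comm, ← e1]
    exact Finset.sum_congr rfl fun i _ => Finset.sum_congr rfl fun j _ => by rw [hsym]
  have expand : ∑ i, ∑ j, (-(B i j)) * v i * v j * (y i - y j) ^ 2
      = 2 * (∑ i, ∑ j, B i j * (v i * y i) * (v j * y j))
        - (∑ i, ∑ j, B i j * v j * (v i * y i ^ 2))
        - (∑ i, ∑ j, B i j * v i * (v j * y j ^ 2)) := by
    simp only [← Finset.sum_sub_distrib, Finset.mul_sum]
    refine Finset.sum_congr rfl fun i _ => Finset.sum_congr rfl fun j _ => by ring
  have hnn : 0 ≤ ∑ i, ∑ j, (-(B i j)) * v i * v j * (y i - y j) ^ 2 := by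
    refine Finset.sum_nonneg fun i _ => Finset.sum_nonneg fun j _ => ?_
    rcases eq_or_ne i j with rfl | hij
    · simp
    · have h1 : 0 ≤ -(B i j) := by linarith [hoff i j hij]
      have := (hv i).le
      have := (hv j).le
      positivity
  have hsq : 0 ≤ ∑ i, (x i) ^ 2 := Finset.sum_nonneg fun i _ => sq_nonneg _
  have final : x ⬝ᵥ B.mulVec x
      = lam * ∑ i, (x i) ^ 2 + (1/2) * ∑ i, ∑ j, (-(B i j)) * v i * v j * (y i - y j) ^ 2 := by
    rw [expand, hdot, e1, e2]; ring
  rw [final]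
  have := mul_nonneg hlam hsq
  linarith

theorem stmt_12 (m k : ℕ)
    (D₁ : Matrix (Fin m) (Fin m) ℝ) (hD₁ : D₁.IsDiag)
    (D₂ : Matrix (Fin k) (Fin k) ℝ) (hD₂ : D₂.IsDiag)
    (C : Matrix (Fin m) (Fin k) ℝ)
    (hC : ∀ (i : Fin m) (j : Fin k), 0 ≤ C i j)
    (A : Matrix (Fin m ⊕ Fin k) (Fin m ⊕ Fin k) ℝ)
    (hA : A = Matrix.fromBlocks D₁ C Cᵀ D₂)
    (w₁ : Fin m → ℝ) (hw₁ : ∀ i, 0 < w₁ i)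
    (w₂ : Fin k → ℝ) (hw₂ : ∀ i, 0 < w₂ i)
    (lam : ℝ) (hlam : 0 ≤ lam)
    (heig : A.mulVec (Sum.elim w₁ (-w₂)) = lam • Sum.elim w₁ (-w₂))
    (s : Fin m ⊕ Fin k → ℝ)
    (hs : s = Sum.elim (fun _ => (1 : ℝ)) (fun _ => (-1 : ℝ))) :
    (∀ i j : Fin m ⊕ Fin k, i ≠ j → s i * A i j * s j ≤ 0) ∧
    A.PosSemidef := by
  have hAsym : ∀ i j, A i j = A j i := by
    subst hA
    rintro (i | i) (j | j)
    · rcases eq_or_ne i j with rfl | hij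
      · rfl
      · simp [fromBlocks, hD₁ hij, hD₁ hij.symm]
    · simp [fromBlocks]
    · simp [fromBlocks]
    · rcases eq_or_ne i j with rfl | hij
      · rfl
      · simp [fromBlocks, hD₂ hij, hD₂ hij.symm]
  have part1 : ∀ i j : Fin m ⊕ Fin k, i ≠ j → s i * A i j * s j ≤ 0 := by
    subst hA hs
    rintro (i | i) (j | j) hij
    · have hij' : i ≠ j := fun h => hij (by rw [h])
      simp [fromBlocks, hD₁ hij']
    · simpa [fromBlocks] using hC i j
    · simpa [fromBlocks] using hC j i
    · have hij' : i ≠ j := fun h => hij (by rw [h])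
      simp [fromBlocks, hD₂ hij']
  refine ⟨part1, posSemidef_iff_dotProduct_mulVec.mpr ⟨?_, ?_⟩⟩
  · -- Hermitian
    ext i j
    simp [conjTranspose_apply, hAsym j i]
  · -- nonnegative quadratic form
    intro x
    have hss : ∀ i, s i * s i = 1 := by
      subst hs; rintro (i | i) <;> norm_num
    set wv : Fin m ⊕ Fin k → ℝ := Sum.elim w₁ (-w₂) with hwv
    set v : Fin m ⊕ Fin k → ℝ := Sum.elim w₁ w₂ with hv
    have hv0 : ∀ i, 0 < v i := by
      rintro (i | i)
      · exact hw₁ i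
      · exact hw₂ i
    have hwvs : ∀ i, wv i = s i * v i := by
      subst hs; rintro (i | i) <;> simp [hwv, hv]
    set B : Matrix (Fin m ⊕ Fin k) (Fin m ⊕ Fin k) ℝ :=
      Matrix.of (fun i j => s i * A i j * s j) with hB
    have hBsym : ∀ i j, B i j = B j i := by
      intro i j; simp only [hB, Matrix.of_apply, hAsym i j]; ring
    have hBoff : ∀ i j, i ≠ j → B i j ≤ 0 := fun i j hij => part1 i j hij
    have heigB : ∀ i, ∑ j, B i j * v j = lam * v i := by
      intro i
      have h := congrFun heig i
      simp only [Matrix.mulVec, dotProduct, Pi.smul_apply, smul_eq_mul] at h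
      calc ∑ j, B i j * v j = s i * ∑ j, A i j * wv j := by
            rw [Finset.mul_sum]
            refine Finset.sum_congr rfl fun j _ => ?_
            rw [hwvs j]; simp only [hB, Matrix.of_apply]
            have := hss j
            nlinarith [hss j]
        _ = s i * (lam * wv i) := by rw [h]
        _ = lam * v i := by rw [hwvs i]; linear_combination lam * v i * hss i
    have hkey := key_psd B hBsym hBoff v hv0 lam hlam heigB (fun i => s i * x i)
    have hquad : (star x) ⬝ᵥ A.mulVec x
        = (fun i => s i * x i) ⬝ᵥ B.mulVec (fun i => s i * x i) := by
      simp only [dotProduct, Matrix.mulVec, Finset.mul_sum, star_trivial]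
      refine Finset.sum_congr rfl fun i _ => Finset.sum_congr rfl fun j _ => ?_
      simp only [hB, Matrix.of_apply]
      linear_combination (-(A i j * x i * x j * s j * s j)) * hss i - (A i j * x i * x j) * hss j
    rw [hquad]
    exact hkey
end

section
/- For every n ≥ 2 and every i with 1 ≤ i ≤ n-1, the matrix E_i := I_n + ∑_{k=1}^{n-1} (J_n^{ki} + (J_nᵀ)^{ki}) admits an integer completely positive factorization E_i = U_i U_iᵀ with U_i entrywise nonnegative integers. Consequently, any nonnegative-integer combination ∑ a_i E_i admits an integer completely positive factorization. -/
/-!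
Since `J` shifts indices by one, `(E_i) r s` counts the `k ∈ [-(n-1), n-1]` with `s - r = k i`,
so `E_i` is the `0/1` matrix of the relation `r ≡ s [MOD i]`, i.e. `U Uᵀ` for the `0/1` matrix `U`
sending row `r` to column `r % i`. Gram matrices `U Uᵀ` of nonnegative integer matrices form an
additive monoid (juxtapose the factors), which handles the nonnegative integer combinations.
-/

open Matrix

section IntCPCone

variable {ι κ κ' : Type*}

def natGram [Fintype κ] (U : Matrix ι κ ℕ) : Matrix ι ι ℤ :=
  U.map (fun x : ℕ => (x : ℤ)) * (U.map (fun x : ℕ => (x : ℤ)))ᵀ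

lemma natGram_submatrix_equiv [Fintype κ] [Fintype κ'] (U : Matrix ι κ ℕ) (e : κ' ≃ κ) :
    natGram (U.submatrix id e) = natGram U := by
  rw [natGram, ← submatrix_map, transpose_submatrix, submatrix_mul_equiv, submatrix_id_id, natGram]

lemma natGram_fromCols [Fintype κ] [Fintype κ'] (U : Matrix ι κ ℕ) (V : Matrix ι κ' ℕ) :
    natGram (fromCols U V) = natGram U + natGram V := by
  rw [natGram, fromCols_map, transpose_fromCols, fromCols_mul_fromRows, natGram, natGram]

lemma natGram_one_submatrix [Fintype κ] [DecidableEq κ] (f : ι → κ) :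
    natGram ((1 : Matrix κ κ ℕ).submatrix f id) = (1 : Matrix κ κ ℤ).submatrix f f := by
  rw [natGram, ← submatrix_map, transpose_submatrix, Matrix.map_one _ Nat.cast_zero Nat.cast_one,
    transpose_one, ← submatrix_mul _ _ _ _ _ Function.bijective_id, Matrix.mul_one]

variable (ι) in
def intCPCone : AddSubmonoid (Matrix ι ι ℤ) where
  carrier := {A | ∃ (m : ℕ) (U : Matrix ι (Fin m) ℕ), A = natGram U}
  zero_mem' := ⟨0, 0, by ext; simp [natGram]⟩
  add_mem' := by
    rintro _ _ ⟨m, U, rfl⟩ ⟨m', V, rfl⟩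
    exact ⟨m + m', (fromCols U V).submatrix id finSumFinEquiv.symm,
      by rw [natGram_submatrix_equiv, natGram_fromCols]⟩

lemma natGram_mem_intCPCone [Fintype κ] (U : Matrix ι κ ℕ) : natGram U ∈ intCPCone ι :=
  ⟨_, U.submatrix id (Fintype.equivFin κ).symm, (natGram_submatrix_equiv _ _).symm⟩

lemma one_submatrix_mem_intCPCone [Fintype κ] [DecidableEq κ] (f : ι → κ) :
    (1 : Matrix κ κ ℤ).submatrix f f ∈ intCPCone ι :=
  natGram_one_submatrix f ▸ natGram_mem_intCPCone _

end IntCPCone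

section Superdiagonal

variable {R : Type*} {n : ℕ}

lemma pow_apply_of_superdiagonal [Semiring R] {J : Matrix (Fin n) (Fin n) R}
    (hJ : ∀ i j : Fin n, J i j = if i.val + 1 = j.val then 1 else 0) (m : ℕ) (r s : Fin n) :
    (J ^ m) r s = if r.val + m = s.val then 1 else 0 := by
  induction m generalizing r with
  | zero => simp [one_apply, Fin.ext_iff]
  | succ m ih =>
    simp only [pow_succ', mul_apply, hJ, ih, ite_mul, one_mul, zero_mul]
    rw [Fin.sum_univ_eq_sum_range (fun t => if r.val + 1 = t then if t + m = s.val then 1 else 0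
      else 0), Finset.sum_ite_eq, ← ite_and]
    exact if_congr (by simp only [Finset.mem_range]; omega) rfl rfl

lemma sum_Icc_ite_add_mul_eq [AddCommMonoidWithOne R] {N i r s : ℕ} (hi : 0 < i) (hN : s - r ≤ N) :
    ∑ k ∈ Finset.Icc 1 N, (if r + k * i = s then (1 : R) else 0) =
      if r < s ∧ i ∣ s - r then 1 else 0 := by
  by_cases h : r < s ∧ i ∣ s - r
  · obtain ⟨hrs, c, hc⟩ := h
    have hk : ∀ k, r + k * i = s ↔ k = c := fun k => by
      constructor
      · intro hk
        exact Nat.eq_of_mul_eq_mul_right hi (by rw [mul_comm c]; omega)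
      · rintro rfl
        rw [mul_comm]
        omega
    have hc1 : 1 ≤ c := Nat.pos_of_ne_zero (by rintro rfl; omega)
    have hcN : c ≤ N := (Nat.le_mul_of_pos_left c hi).trans (hc ▸ hN)
    simp_rw [hk, Finset.sum_ite_eq', Finset.mem_Icc]
    rw [if_pos ⟨hc1, hcN⟩, if_pos ⟨hrs, c, hc⟩]
  · rw [if_neg h]
    refine Finset.sum_eq_zero fun k hk => if_neg ?_
    rintro rfl
    have : 0 < k * i := Nat.mul_pos (Finset.mem_Icc.1 hk).1 hi
    exact h ⟨by omega, ⟨k, by rw [mul_comm]; omega⟩⟩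

lemma one_add_sum_pow_eq_one_submatrix [CommSemiring R] {J : Matrix (Fin n) (Fin n) R}
    (hJ : ∀ i j : Fin n, J i j = if i.val + 1 = j.val then 1 else 0) {i : ℕ} (hi : 0 < i) :
    1 + ∑ k ∈ Finset.Icc 1 (n - 1), (J ^ (k * i) + Jᵀ ^ (k * i)) =
      (1 : Matrix (Fin i) (Fin i) R).submatrix (fun r => ⟨r.val % i, Nat.mod_lt _ hi⟩)
        (fun r => ⟨r.val % i, Nat.mod_lt _ hi⟩) := by
  ext r s
  have hr := r.isLt
  have hs := s.isLt
  simp only [Matrix.add_apply, Matrix.sum_apply, ← transpose_pow, transpose_apply,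
    pow_apply_of_superdiagonal hJ, Finset.sum_add_distrib, submatrix_apply, one_apply, Fin.ext_iff]
  rw [sum_Icc_ite_add_mul_eq hi (by omega), sum_Icc_ite_add_mul_eq hi (by omega)]
  rcases lt_trichotomy r.val s.val with h | h | h
  · simp [h, h.ne, h.asymm, (Nat.modEq_iff_dvd' h.le).symm, Nat.ModEq]
  · simp [h]
  · simp [h, h.ne', h.asymm, (Nat.modEq_iff_dvd' h.le).symm, Nat.ModEq, eq_comm]

end Superdiagonal

theorem stmt_18_general (n : ℕ)
    (J : Matrix (Fin n) (Fin n) ℤ)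
    (hJ : ∀ i j : Fin n, J i j = if i.val + 1 = j.val then 1 else 0)
    (E : ℕ → Matrix (Fin n) (Fin n) ℤ)
    (hE : ∀ i : ℕ, E i = 1 + ∑ k ∈ Finset.Icc 1 (n - 1), (J ^ (k * i) + (Jᵀ) ^ (k * i))) :
    (∀ i : ℕ, 1 ≤ i → i ≤ n - 1 →
      ∃ (m : ℕ) (U : Matrix (Fin n) (Fin m) ℕ),
        E i = (U.map (fun x : ℕ => (x : ℤ))) * (U.map (fun x : ℕ => (x : ℤ)))ᵀ) ∧
    (∀ a : ℕ → ℕ,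
      ∃ (m : ℕ) (U : Matrix (Fin n) (Fin m) ℕ),
        ∑ i ∈ Finset.Icc 1 (n - 1), (a i : ℤ) • E i
          = (U.map (fun x : ℕ => (x : ℤ))) * (U.map (fun x : ℕ => (x : ℤ)))ᵀ) := by
  have hE_mem : ∀ i, 1 ≤ i → E i ∈ intCPCone (Fin n) := fun i hi => by
    rw [hE i, one_add_sum_pow_eq_one_submatrix hJ hi]
    exact one_submatrix_mem_intCPCone _
  refine ⟨fun i hi _ => hE_mem i hi, fun a => ?_⟩
  show ∑ i ∈ _, _ ∈ intCPCone (Fin n)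
  refine AddSubmonoid.sum_mem _ fun i hi => ?_
  rw [Nat.cast_smul_eq_nsmul]
  exact AddSubmonoid.nsmul_mem _ (hE_mem i (Finset.mem_Icc.1 hi).1) _

theorem stmt_18 (n : ℕ) (hn : 2 ≤ n)
    (J : Matrix (Fin n) (Fin n) ℤ)
    (hJ : ∀ i j : Fin n, J i j = if i.val + 1 = j.val then 1 else 0)
    (E : ℕ → Matrix (Fin n) (Fin n) ℤ)
    (hE : ∀ i : ℕ, E i = 1 + ∑ k ∈ Finset.Icc 1 (n - 1), (J ^ (k * i) + (Jᵀ) ^ (k * i))) :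
    (∀ i : ℕ, 1 ≤ i → i ≤ n - 1 →
      ∃ (m : ℕ) (U : Matrix (Fin n) (Fin m) ℕ),
        E i = (U.map (fun x : ℕ => (x : ℤ))) * (U.map (fun x : ℕ => (x : ℤ)))ᵀ) ∧
    (∀ a : ℕ → ℕ,
      ∃ (m : ℕ) (U : Matrix (Fin n) (Fin m) ℕ),
        ∑ i ∈ Finset.Icc 1 (n - 1), (a i : ℤ) • E i
          = (U.map (fun x : ℕ => (x : ℤ))) * (U.map (fun x : ℕ => (x : ℤ)))ᵀ) :=
  stmt_18_general n J hJ E hE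
end
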